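/- arXiv:2206.12758 — 4 statements merged into one kernel-verified Lean document; each statement's English description precedes it below -/
import Mathlib

section
/- Let G be a finite group that is a central product of A and B. If there exist H ≤ A and K ≤ B with HK ∈ CD(G), then for all X ∈ CD(A) and Y ∈ CD(B), the product XY lies in CD(G); that is, CD(A)·CD(B) ⊆ CD(G). -/
open scoped Pointwise

/-- Relative Chermak–Delgado measure `m_W(K) = |K| * |C_W(K)|`. -/
noncomputable def m {G : Type*} [Group G] (W K : Subgroup G) : ℕ :=
  Nat.card K * Nat.card (W ⊓ Subgroup.centralizer (K : Set G) : Subgroup G)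

/-- The Chermak–Delgado lattice of `W`: subgroups of `W` maximizing `m W`. -/
def CD {G : Type*} [Group G] (W : Subgroup G) : Set (Subgroup G) :=
  {K | K ≤ W ∧ ∀ L ≤ W, m W L ≤ m W K}

/-- `m*(W)`, the maximal Chermak–Delgado measure over subgroups of `W`. -/
noncomputable def mstar {G : Type*} [Group G] (W : Subgroup G) : ℕ :=
  ⨆ K : {K : Subgroup G // K ≤ W}, m W K

open Subgroup

/-! With `Z = A ⊓ B`, which is central, one has `|HK| |H ∩ K| = |H| |K|` for `H ≤ A`,
`K ≤ B`, and `C_G(HK) = C_A(H) C_B(K)` with `C_A(H) ∩ C_B(K) = Z`; hence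
`m_G(HK) |H ∩ K| |Z| = m_A(H) m_B(K)`. Adjoining `Z` to `H` and `K` does not decrease `m_G(HK)`
and makes `H ∩ K = Z`, so `m*(G) |Z|² ≤ m_G(HK) |Z|² = m_A(H) m_B(K) ≤ m_A(X) m_B(Y)`, and
`m_A(X) m_B(Y) = m_G(XY) |X ∩ Y| |Z| ≤ m_G(XY) |Z|²`. -/

namespace Subgroup

variable {G : Type*} [Group G]

theorem centralizer_sup (H K : Subgroup G) :
    centralizer ((H ⊔ K : Subgroup G) : Set G) = centralizer H ⊓ centralizer K := by
  rw [← closure_eq H, ← closure_eq K, ← closure_union, centralizer_closure, closure_eq,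
    closure_eq]
  exact SetLike.coe_injective Set.centralizer_union

theorem card_sup_mul_card_inf_of_le_normalizer {H N : Subgroup G} (hLE : H ≤ normalizer N) :
    Nat.card (H ⊔ N : Subgroup G) * Nat.card (H ⊓ N : Subgroup G) =
      Nat.card H * Nat.card N := by
  have hrel : N.relIndex H = N.relIndex (H ⊔ N) := by
    have := normal_subgroupOf_of_le_normalizer hLE
    have := normal_subgroupOf_sup_of_le_normalizer hLE
    exact Nat.card_congr (QuotientGroup.quotientInfEquivProdNormalizerQuotient H N hLE).toEquiv
  have hH := relIndex_mul_relIndex ⊥ (H ⊓ N) H bot_le inf_le_left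
  have hN := relIndex_mul_relIndex ⊥ N (H ⊔ N) bot_le le_sup_right
  rw [relIndex_bot_left, relIndex_bot_left, inf_relIndex_left] at hH
  rw [relIndex_bot_left, relIndex_bot_left] at hN
  rw [← hN, ← hH, hrel]
  ring

end Subgroup

section ChermakDelgado

variable {G : Type*} [Group G]

theorem m_top (K : Subgroup G) : m ⊤ K = Nat.card K * Nat.card (centralizer (K : Set G)) := by
  rw [m, top_inf_eq]

theorem m_top_le_m_top_sup_of_le_center [Finite G] (K : Subgroup G) {Z : Subgroup G}
    (hZ : Z ≤ center G) : m ⊤ K ≤ m ⊤ (K ⊔ Z) := by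
  rw [m_top, m_top, centralizer_sup, centralizer_eq_top_iff_subset.2 hZ, inf_top_eq]
  exact Nat.mul_le_mul_right _ (card_le_of_le le_sup_left)

variable {A B : Subgroup G}

theorem inf_le_center_of_le_centralizer (hAB : A ≤ centralizer B) (hsup : A ⊔ B = ⊤) :
    A ⊓ B ≤ center G := by
  rw [← centralizer_univ, ← coe_top, ← hsup, centralizer_sup]
  exact le_inf (inf_le_right.trans (le_centralizer_iff.1 hAB)) (inf_le_left.trans hAB)

theorem centralizer_sup_of_le_of_le (hAB : A ≤ centralizer B) (hsup : A ⊔ B = ⊤)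
    {H K : Subgroup G} (hH : H ≤ A) (hK : K ≤ B) :
    centralizer ((H ⊔ K : Subgroup G) : Set G) =
      (A ⊓ centralizer H) ⊔ (B ⊓ centralizer K) := by
  rw [centralizer_sup]
  refine le_antisymm (fun g hg => ?_) (sup_le
    (le_inf inf_le_right (inf_le_left.trans (hAB.trans (centralizer_le hK))))
    (le_inf (inf_le_left.trans ((le_centralizer_iff.1 hAB).trans (centralizer_le hH)))
      inf_le_right))
  have hg' : g ∈ ((A ⊔ B : Subgroup G) : Set G) := hsup ▸ mem_top g
  rw [coe_mul_of_left_le_normalizer_right A B (hAB.trans (centralizer_le_normalizer _))] at hg'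
  obtain ⟨a, ha, b, hb, rfl⟩ := hg'
  refine mul_mem_sup ⟨ha, fun x hx => ?_⟩ ⟨hb, fun y hy => ?_⟩
  · have hxg : Commute x (a * b) := hg.1 x hx
    have hxb : Commute x b := (mem_centralizer_iff.1 (hAB (hH hx)) b hb).symm
    simpa using (hxg.mul_right hxb.inv_right).eq
  · have hyg : Commute y (a * b) := hg.2 y hy
    have hya : Commute y a := mem_centralizer_iff.1 (hAB ha) y (hK hy)
    simpa using (hya.inv_right.mul_right hyg).eq

theorem m_top_sup_mul_card_inf_mul_card_inf (hAB : A ≤ centralizer B) (hsup : A ⊔ B = ⊤)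
    {H K : Subgroup G} (hH : H ≤ A) (hK : K ≤ B) :
    m ⊤ (H ⊔ K) * (Nat.card (H ⊓ K : Subgroup G) * Nat.card (A ⊓ B : Subgroup G)) =
      m A H * m B K := by
  have hnorm {H' K' : Subgroup G} (hH' : H' ≤ A) (hK' : K' ≤ B) : H' ≤ normalizer K' :=
    hH'.trans (hAB.trans ((centralizer_le hK').trans (centralizer_le_normalizer _)))
  have hZ := inf_le_center_of_le_centralizer hAB hsup
  have hcent : (A ⊓ centralizer H) ⊓ (B ⊓ centralizer K) = A ⊓ B :=
    le_antisymm (inf_le_inf inf_le_left inf_le_left)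
      (le_inf (le_inf inf_le_left (hZ.trans (center_le_centralizer _)))
        (le_inf inf_le_right (hZ.trans (center_le_centralizer _))))
  rw [m_top, centralizer_sup_of_le_of_le hAB hsup hH hK, m, m, mul_mul_mul_comm,
    card_sup_mul_card_inf_of_le_normalizer (hnorm hH hK), ← hcent,
    card_sup_mul_card_inf_of_le_normalizer (hnorm inf_le_left inf_le_left), mul_mul_mul_comm]

theorem m_top_sup_le_of_mem_CD [Finite G] (hAB : A ≤ centralizer B) (hsup : A ⊔ B = ⊤)
    {X Y H K : Subgroup G} (hX : X ∈ CD A) (hY : Y ∈ CD B) (hH : H ≤ A) (hK : K ≤ B) :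
    m ⊤ (H ⊔ K) ≤ m ⊤ (X ⊔ Y) := by
  set Z := A ⊓ B
  have hZ : Z ≤ center G := inf_le_center_of_le_centralizer hAB hsup
  have hHZ : H ⊔ Z ≤ A := sup_le hH inf_le_left
  have hKZ : K ⊔ Z ≤ B := sup_le hK inf_le_right
  have hHK : m ⊤ (H ⊔ K) ≤ m ⊤ ((H ⊔ Z) ⊔ (K ⊔ Z)) := by
    rw [sup_sup_sup_comm, sup_idem]
    exact m_top_le_m_top_sup_of_le_center _ hZ
  have hinf : (H ⊔ Z) ⊓ (K ⊔ Z) = Z :=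
    le_antisymm (inf_le_inf hHZ hKZ) (le_inf le_sup_right le_sup_right)
  have key : m ⊤ ((H ⊔ Z) ⊔ (K ⊔ Z)) * (Nat.card Z * Nat.card Z) ≤
      m ⊤ (X ⊔ Y) * (Nat.card Z * Nat.card Z) :=
    calc _ = m A (H ⊔ Z) * m B (K ⊔ Z) := by
          rw [← m_top_sup_mul_card_inf_mul_card_inf hAB hsup hHZ hKZ, hinf]
      _ ≤ m A X * m B Y := Nat.mul_le_mul (hX.2 _ hHZ) (hY.2 _ hKZ)
      _ = m ⊤ (X ⊔ Y) * (Nat.card (X ⊓ Y : Subgroup G) * Nat.card Z) :=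
          (m_top_sup_mul_card_inf_mul_card_inf hAB hsup hX.1 hY.1).symm
      _ ≤ _ := Nat.mul_le_mul_left _
          (Nat.mul_le_mul_right _ (card_le_of_le (inf_le_inf hX.1 hY.1)))
  exact hHK.trans (Nat.le_of_mul_le_mul_right key (Nat.mul_pos Nat.card_pos Nat.card_pos))

end ChermakDelgado

theorem stmt11 {G : Type*} [Group G] [Finite G] (A B : Subgroup G)
    (hG : ∀ g : G, ∃ a ∈ A, ∃ b ∈ B, g = a * b)
    (hcomm : ∀ a ∈ A, ∀ b ∈ B, a * b = b * a)
    (hex : ∃ H K : Subgroup G, H ≤ A ∧ K ≤ B ∧ H ⊔ K ∈ CD (⊤ : Subgroup G)) :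
    ∀ X ∈ CD A, ∀ Y ∈ CD B, X ⊔ Y ∈ CD (⊤ : Subgroup G) := by
  intro X hX Y hY
  obtain ⟨H, K, hH, hK, hHK⟩ := hex
  have hAB : A ≤ centralizer B := fun a ha b hb => (hcomm a ha b hb).symm
  have hsup : A ⊔ B = ⊤ := eq_top_iff.2 fun g _ => by
    obtain ⟨a, ha, b, hb, rfl⟩ := hG g
    exact mul_mem_sup ha hb
  exact ⟨le_top, fun L _ =>
    (hHK.2 L le_top).trans (m_top_sup_le_of_mem_CD hAB hsup hX hY hH hK)⟩
end

section
/- Let G be a finite group that is a central product of A and B. Then CD(A)·CD(B) ⊆ CD(G), the maximum element of CD(G) equals the product of the maximum elements of CD(A) and CD(B), and the minimum element of CD(G) equals the product of the minimum elements of CD(A) and CD(B). -/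
open scoped Pointwise

open Subgroup

set_option linter.unusedSectionVars false

section Aux

variable {G : Type*} [Group G] [Finite G]

lemma cd_card_inf_mul_relindex (H K : Subgroup G) :
    Nat.card (K ⊓ H : Subgroup G) * H.relIndex K = Nat.card K := by
  have h1 : Nat.card (H.subgroupOf K) = Nat.card (K ⊓ H : Subgroup G) := by
    rw [← inf_subgroupOf_left H K]
    exact Nat.card_congr (subgroupOfEquivOfLe inf_le_left).toEquiv
  have := Subgroup.card_mul_index (H.subgroupOf K)
  rwa [h1] at this

lemma cd_eq_of_le_of_card_le {H K : Subgroup G} (h : H ≤ K)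
    (hc : Nat.card K ≤ Nat.card H) : H = K := by
  apply SetLike.coe_injective
  have h1 : Nat.card H = (H : Set G).ncard := Nat.card_coe_set_eq _
  have h2 : Nat.card K = (K : Set G).ncard := Nat.card_coe_set_eq _
  exact Set.eq_of_subset_of_ncard_le h (by omega) (Set.toFinite _)

lemma m_pos (W K : Subgroup G) : 0 < m W K :=
  Nat.mul_pos Nat.card_pos Nat.card_pos

lemma le_mstar {W L : Subgroup G} (h : L ≤ W) : m W L ≤ mstar W := by
  have : Finite (Subgroup G) := Finite.of_injective _ (SetLike.coe_injective (A := Subgroup G))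
  exact le_ciSup (f := fun K : {K : Subgroup G // K ≤ W} => m W K)
    (Set.Finite.bddAbove (Set.finite_range _)) ⟨L, h⟩

lemma mstar_eq {W K : Subgroup G} (h : K ∈ CD W) : m W K = mstar W := by
  have : Nonempty {K : Subgroup G // K ≤ W} := ⟨⟨⊥, bot_le⟩⟩
  exact le_antisymm (le_mstar h.1) (ciSup_le (fun L => h.2 L L.2))

lemma mstar_pos (W : Subgroup G) : 0 < mstar W :=
  lt_of_lt_of_le (m_pos W ⊥) (le_mstar bot_le)

lemma mem_CD_of_max {W K : Subgroup G} (hK : K ≤ W) (h : m W K = mstar W) : K ∈ CD W :=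
  ⟨hK, fun L hL => h ▸ le_mstar hL⟩

lemma cd_centralizer_sup (H K : Subgroup G) :
    centralizer ((H ⊔ K : Subgroup G) : Set G) =
      centralizer (H : Set G) ⊓ centralizer (K : Set G) := by
  ext g
  rw [mem_inf]
  constructor
  · intro hg
    exact ⟨centralizer_le (SetLike.coe_subset_coe.mpr le_sup_left) hg,
           centralizer_le (SetLike.coe_subset_coe.mpr le_sup_right) hg⟩
  · rintro ⟨h1, h2⟩
    rw [← zpowers_le, le_centralizer_iff, sup_le_iff]
    exact ⟨le_centralizer_iff.mpr (zpowers_le.mpr h1), le_centralizer_iff.mpr (zpowers_le.mpr h2)⟩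

lemma cd_eq_of_prod {a b a' b' : ℕ} (ha : a ≤ a') (hb : b ≤ b') (h : a' * b' ≤ a * b)
    (ha0 : 0 < a) (hb0 : 0 < b') : a = a' ∧ b = b' := by
  have he : a * b = a' * b' := le_antisymm (Nat.mul_le_mul ha hb) h
  constructor
  · have : a' * b' ≤ a * b' := he ▸ Nat.mul_le_mul_left a hb
    exact le_antisymm ha (Nat.le_of_mul_le_mul_right this hb0)
  · have : a * b' ≤ a * b := (Nat.mul_le_mul ha le_rfl).trans_eq he.symm
    exact le_antisymm hb (Nat.le_of_mul_le_mul_left this ha0)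

end Aux

section Central

variable {G : Type*} [Group G] [Finite G] {A B : Subgroup G}

lemma cd_sup_top (hG : ∀ g : G, ∃ a ∈ A, ∃ b ∈ B, g = a * b) : A ⊔ B = ⊤ := by
  rw [eq_top_iff]
  intro g _
  obtain ⟨a, ha, b, hb, rfl⟩ := hG g
  exact mul_mem (mem_sup_left ha) (mem_sup_right hb)

lemma cd_normal_right (hG : ∀ g : G, ∃ a ∈ A, ∃ b ∈ B, g = a * b)
    (hcomm : ∀ a ∈ A, ∀ b ∈ B, a * b = b * a) : B.Normal := by
  constructor
  intro b hb g
  obtain ⟨a, ha, b', hb', rfl⟩ := hG g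
  have hmem : b' * b * b'⁻¹ ∈ B := mul_mem (mul_mem hb' hb) (inv_mem hb')
  have : a * b' * b * (a * b')⁻¹ = a * (b' * b * b'⁻¹) * a⁻¹ := by group
  rw [this, hcomm a ha _ hmem, mul_inv_cancel_right]
  exact hmem

lemma cd_right_le_centralizer (hcomm : ∀ a ∈ A, ∀ b ∈ B, a * b = b * a)
    {X : Subgroup G} (hX : X ≤ A) : B ≤ centralizer (X : Set G) := fun b hb =>
  mem_centralizer_iff.mpr fun x hx => hcomm x (hX hx) b hb

/-- membership in a join with a normal subgroup. -/
lemma cd_mem_sup_normal {N : Subgroup G} [N.Normal] (H : Subgroup G) {g : G}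
    (hg : g ∈ H ⊔ N) : ∃ h ∈ H, ∃ n ∈ N, g = h * n := by
  have : g ∈ ((H ⊔ N : Subgroup G) : Set G) := hg
  rw [Subgroup.mul_normal H N] at this
  obtain ⟨h, hh, n, hn, rfl⟩ := this
  exact ⟨h, hh, n, hn, rfl⟩

/-- `A ⊓ (U ⊔ B) ⊔ B = U ⊔ B`. -/
lemma cd_sup_proj (hG : ∀ g : G, ∃ a ∈ A, ∃ b ∈ B, g = a * b) (U : Subgroup G) :
    A ⊓ (U ⊔ B) ⊔ B = U ⊔ B := by
  refine le_antisymm (sup_le inf_le_right le_sup_right) (sup_le (fun u hu => ?_) le_sup_right)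
  obtain ⟨a, ha, b, hb, rfl⟩ := hG u
  have haU : a ∈ U ⊔ B := by
    have : a = a * b * b⁻¹ := by group
    rw [this]
    exact mul_mem (mem_sup_left hu) (mem_sup_right (inv_mem hb))
  exact mul_mem (mem_sup_left (mem_inf.mpr ⟨ha, haU⟩)) (mem_sup_right hb)

/-- the main counting lemma : `|U| |A ⊓ B| = |A ⊓ (U ⊔ B)| |U ⊓ B|`. -/
lemma cd_count (hG : ∀ g : G, ∃ a ∈ A, ∃ b ∈ B, g = a * b)
    (hcomm : ∀ a ∈ A, ∀ b ∈ B, a * b = b * a) (U : Subgroup G) :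
    Nat.card U * Nat.card (A ⊓ B : Subgroup G) =
      Nat.card (A ⊓ (U ⊔ B) : Subgroup G) * Nat.card (U ⊓ B : Subgroup G) := by
  have hN : B.Normal := cd_normal_right hG hcomm
  have h1 := cd_card_inf_mul_relindex B U
  have h2 := cd_card_inf_mul_relindex B (A ⊓ (U ⊔ B))
  have hXB : A ⊓ (U ⊔ B) ⊓ B = A ⊓ B := by
    rw [inf_assoc, inf_eq_right.mpr (le_sup_right : B ≤ U ⊔ B)]
  have hrel : B.relIndex (A ⊓ (U ⊔ B)) = B.relIndex U := by
    rw [← relIndex_sup_right (A ⊓ (U ⊔ B)) B, cd_sup_proj hG U, relIndex_sup_right]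
  rw [hXB, hrel] at h2
  calc Nat.card U * Nat.card (A ⊓ B : Subgroup G)
      = (Nat.card (U ⊓ B : Subgroup G) * B.relIndex U) * Nat.card (A ⊓ B : Subgroup G) := by
        rw [h1]
    _ = (Nat.card (A ⊓ B : Subgroup G) * B.relIndex U) * Nat.card (U ⊓ B : Subgroup G) := by
        ring
    _ = Nat.card (A ⊓ (U ⊔ B) : Subgroup G) * Nat.card (U ⊓ B : Subgroup G) := by rw [h2]

end Central

section Central2

variable {G : Type*} [Group G] [Finite G] {A B : Subgroup G}

lemma cd_swap_hG (hG : ∀ g : G, ∃ a ∈ A, ∃ b ∈ B, g = a * b)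
    (hcomm : ∀ a ∈ A, ∀ b ∈ B, a * b = b * a) :
    ∀ g : G, ∃ b ∈ B, ∃ a ∈ A, g = b * a := fun g => by
  obtain ⟨a, ha, b, hb, rfl⟩ := hG g
  exact ⟨b, hb, a, ha, hcomm a ha b hb⟩

lemma cd_swap_comm (hcomm : ∀ a ∈ A, ∀ b ∈ B, a * b = b * a) :
    ∀ b ∈ B, ∀ a ∈ A, b * a = a * b := fun b hb a ha => (hcomm a ha b hb).symm

/-- every `u ∈ U` decomposes with components in the projections. -/
lemma cd_proj_decomp (hG : ∀ g : G, ∃ a ∈ A, ∃ b ∈ B, g = a * b)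
    {U : Subgroup G} {u : G} (hu : u ∈ U) :
    ∃ a ∈ A ⊓ (U ⊔ B), ∃ b ∈ B ⊓ (U ⊔ A), u = a * b := by
  obtain ⟨a, ha, b, hb, rfl⟩ := hG u
  have haU : a ∈ U ⊔ B := by
    have h : a = a * b * b⁻¹ := by group
    rw [h]; exact mul_mem (mem_sup_left hu) (mem_sup_right (inv_mem hb))
  have hbU : b ∈ U ⊔ A := by
    have h : b = a⁻¹ * (a * b) := by group
    rw [h]; exact mul_mem (mem_sup_right (inv_mem ha)) (mem_sup_left hu)
  exact ⟨a, mem_inf.mpr ⟨ha, haU⟩, b, mem_inf.mpr ⟨hb, hbU⟩, rfl⟩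

lemma cd_le_proj_sup (hG : ∀ g : G, ∃ a ∈ A, ∃ b ∈ B, g = a * b) (U : Subgroup G) :
    U ≤ (A ⊓ (U ⊔ B)) ⊔ (B ⊓ (U ⊔ A)) := by
  intro u hu
  obtain ⟨a, ha, b, hb, rfl⟩ := cd_proj_decomp hG hu
  exact mul_mem (mem_sup_left ha) (mem_sup_right hb)

/-- `C_A(U) = C_A(π_A U)`. -/
lemma cd_cent_proj (hG : ∀ g : G, ∃ a ∈ A, ∃ b ∈ B, g = a * b)
    (hcomm : ∀ a ∈ A, ∀ b ∈ B, a * b = b * a) (U : Subgroup G) :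
    A ⊓ centralizer (U : Set G) = A ⊓ centralizer ((A ⊓ (U ⊔ B) : Subgroup G) : Set G) := by
  have hN : B.Normal := cd_normal_right hG hcomm
  ext a'
  simp only [mem_inf, mem_centralizer_iff]
  refine and_congr_right fun ha' => ⟨fun hc h hh => ?_, fun hc u hu => ?_⟩
  · obtain ⟨hhA, hhU⟩ := mem_inf.mp hh
    obtain ⟨u, hu, b, hb, rfl⟩ := cd_mem_sup_normal U hhU
    have h1 : b * a' = a' * b := (hcomm a' ha' b hb).symm
    have h2 : u * a' = a' * u := hc u hu
    calc u * b * a' = u * (b * a') := mul_assoc _ _ _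
      _ = u * (a' * b) := by rw [h1]
      _ = u * a' * b := (mul_assoc _ _ _).symm
      _ = a' * u * b := by rw [h2]
      _ = a' * (u * b) := mul_assoc _ _ _
  · obtain ⟨a, ha, b, hb, rfl⟩ := cd_proj_decomp hG hu
    have h2 : a * a' = a' * a := hc a ha
    have h1 : b * a' = a' * b := (hcomm a' ha' b (mem_inf.mp hb).1).symm
    calc a * b * a' = a * (b * a') := mul_assoc _ _ _
      _ = a * (a' * b) := by rw [h1]
      _ = a * a' * b := (mul_assoc _ _ _).symm
      _ = a' * a * b := by rw [h2]
      _ = a' * (a * b) := mul_assoc _ _ _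

/-- `A ⊓ (C_G(U) ⊔ B)` centralizes `U ⊓ A`. -/
lemma cd_proj_cent_le (hG : ∀ g : G, ∃ a ∈ A, ∃ b ∈ B, g = a * b)
    (hcomm : ∀ a ∈ A, ∀ b ∈ B, a * b = b * a) (U : Subgroup G) :
    A ⊓ (centralizer (U : Set G) ⊔ B) ≤ centralizer ((U ⊓ A : Subgroup G) : Set G) := by
  have hN : B.Normal := cd_normal_right hG hcomm
  intro a' ha'
  obtain ⟨ha'A, hsup⟩ := mem_inf.mp ha'
  obtain ⟨c, hc, b, hb, rfl⟩ := cd_mem_sup_normal _ hsup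
  rw [mem_centralizer_iff]
  intro h hh
  obtain ⟨hhU, hhA⟩ := mem_inf.mp hh
  have h1 : h * b = b * h := hcomm h hhA b hb
  have h2 : h * c = c * h := mem_centralizer_iff.mp hc h hhU
  calc h * (c * b) = h * c * b := (mul_assoc _ _ _).symm
    _ = c * h * b := by rw [h2]
    _ = c * (h * b) := mul_assoc _ _ _
    _ = c * (b * h) := by rw [h1]
    _ = c * b * h := (mul_assoc _ _ _).symm

lemma cd_cent_inf_top (hG : ∀ g : G, ∃ a ∈ A, ∃ b ∈ B, g = a * b)
    (hcomm : ∀ a ∈ A, ∀ b ∈ B, a * b = b * a) :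
    centralizer ((A ⊓ B : Subgroup G) : Set G) = ⊤ := by
  rw [eq_top_iff]
  intro g _
  rw [mem_centralizer_iff]
  intro z hz
  obtain ⟨hzA, hzB⟩ := mem_inf.mp hz
  obtain ⟨a, ha, b, hb, rfl⟩ := hG g
  have h1 : z * a = a * z := (hcomm a ha z hzB).symm
  have h2 : z * b = b * z := hcomm z hzA b hb
  calc z * (a * b) = z * a * b := (mul_assoc _ _ _).symm
    _ = a * z * b := by rw [h1]
    _ = a * (z * b) := mul_assoc _ _ _
    _ = a * (b * z) := by rw [h2]
    _ = a * b * z := (mul_assoc _ _ _).symm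

/-- Every member of `CD A` contains `A ⊓ B`. -/
lemma cd_inf_le_CD (hG : ∀ g : G, ∃ a ∈ A, ∃ b ∈ B, g = a * b)
    (hcomm : ∀ a ∈ A, ∀ b ∈ B, a * b = b * a) {X : Subgroup G} (hX : X ∈ CD A) :
    A ⊓ B ≤ X := by
  have hle : m A (X ⊔ (A ⊓ B)) ≤ m A X := hX.2 _ (sup_le hX.1 inf_le_left)
  have hcent : centralizer ((X ⊔ (A ⊓ B) : Subgroup G) : Set G) = centralizer (X : Set G) := by
    rw [cd_centralizer_sup, cd_cent_inf_top hG hcomm, inf_top_eq]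
  unfold m at hle
  rw [hcent] at hle
  have hcard := Nat.le_of_mul_le_mul_right hle
    (Nat.card_pos (α := (A ⊓ centralizer (X : Set G) : Subgroup G)))
  have heq : X = X ⊔ (A ⊓ B) := cd_eq_of_le_of_card_le le_sup_left hcard
  exact le_sup_right.trans heq.ge

/-- key equality : `m_G(XY) |Z|² = m_A(X) m_B(Y)`. -/
lemma cd_m_sup (hG : ∀ g : G, ∃ a ∈ A, ∃ b ∈ B, g = a * b)
    (hcomm : ∀ a ∈ A, ∀ b ∈ B, a * b = b * a) {X Y : Subgroup G} (hXA : X ≤ A) (hYB : Y ≤ B)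
    (hZX : A ⊓ B ≤ X) (hZY : A ⊓ B ≤ Y) :
    m ⊤ (X ⊔ Y) * (Nat.card (A ⊓ B : Subgroup G) * Nat.card (A ⊓ B : Subgroup G))
      = m A X * m B Y := by
  have hN : B.Normal := cd_normal_right hG hcomm
  have hNA : A.Normal := cd_normal_right (cd_swap_hG hG hcomm) (cd_swap_comm hcomm)
  have hAproj : A ⊓ (X ⊔ Y ⊔ B) = X := by
    have h1 : X ⊔ Y ⊔ B = X ⊔ B := by rw [sup_assoc, sup_eq_right.mpr hYB]
    rw [h1]
    refine le_antisymm (fun a ha => ?_) (le_inf hXA le_sup_left)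
    obtain ⟨haA, haXB⟩ := mem_inf.mp ha
    obtain ⟨x, hx, b, hb, rfl⟩ := cd_mem_sup_normal X haXB
    have hbA : b ∈ A := by
      have h : b = x⁻¹ * (x * b) := by group
      rw [h]; exact mul_mem (inv_mem (hXA hx)) haA
    exact mul_mem hx (hZX (mem_inf.mpr ⟨hbA, hb⟩))
  have hBproj : (X ⊔ Y) ⊓ B = Y := by
    refine le_antisymm (fun g hg => ?_) (le_inf le_sup_right hYB)
    obtain ⟨hgXY, hgB⟩ := mem_inf.mp hg
    have hgYA : g ∈ Y ⊔ A := (sup_le (hXA.trans le_sup_right) le_sup_left) hgXY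
    obtain ⟨y, hy, a, ha, rfl⟩ := cd_mem_sup_normal Y hgYA
    have haB : a ∈ B := by
      have h : a = y⁻¹ * (y * a) := by group
      rw [h]; exact mul_mem (inv_mem (hYB hy)) hgB
    exact mul_mem hy (hZY (mem_inf.mpr ⟨ha, haB⟩))
  have c1 : Nat.card (X ⊔ Y : Subgroup G) * Nat.card (A ⊓ B : Subgroup G)
      = Nat.card X * Nat.card Y := by
    have h := cd_count hG hcomm (X ⊔ Y)
    rwa [hAproj, hBproj] at h
  have hBCX : B ≤ centralizer (X : Set G) := cd_right_le_centralizer hcomm hXA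
  have hACY : A ≤ centralizer (Y : Set G) := cd_right_le_centralizer (cd_swap_comm hcomm) hYB
  have hcent : centralizer ((X ⊔ Y : Subgroup G) : Set G)
      = centralizer (X : Set G) ⊓ centralizer (Y : Set G) := cd_centralizer_sup X Y
  have hU1 : centralizer (X : Set G) ⊓ centralizer (Y : Set G) ⊔ B = centralizer (X : Set G) := by
    refine le_antisymm (sup_le inf_le_left hBCX) (fun g hg => ?_)
    obtain ⟨a, ha, b, hb, rfl⟩ := hG g
    have haCX : a ∈ centralizer (X : Set G) := by
      have h : a = a * b * b⁻¹ := by group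
      rw [h]; exact mul_mem hg (inv_mem (hBCX hb))
    exact mul_mem (mem_sup_left (mem_inf.mpr ⟨haCX, hACY ha⟩)) (mem_sup_right hb)
  have hU2 : centralizer (X : Set G) ⊓ centralizer (Y : Set G) ⊓ B
      = B ⊓ centralizer (Y : Set G) := by
    refine le_antisymm (le_inf inf_le_right (inf_le_left.trans inf_le_right))
      (le_inf (le_inf (inf_le_left.trans hBCX) inf_le_right) inf_le_left)
  have c2 : Nat.card (centralizer (X : Set G) ⊓ centralizer (Y : Set G) : Subgroup G) *
        Nat.card (A ⊓ B : Subgroup G)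
      = Nat.card (A ⊓ centralizer (X : Set G) : Subgroup G) *
        Nat.card (B ⊓ centralizer (Y : Set G) : Subgroup G) := by
    have h := cd_count hG hcomm (centralizer (X : Set G) ⊓ centralizer (Y : Set G))
    rwa [hU1, hU2] at h
  unfold m
  rw [top_inf_eq, hcent]
  calc Nat.card (X ⊔ Y : Subgroup G) *
        Nat.card (centralizer (X : Set G) ⊓ centralizer (Y : Set G) : Subgroup G) *
        (Nat.card (A ⊓ B : Subgroup G) * Nat.card (A ⊓ B : Subgroup G))
      = (Nat.card (X ⊔ Y : Subgroup G) * Nat.card (A ⊓ B : Subgroup G)) *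
        (Nat.card (centralizer (X : Set G) ⊓ centralizer (Y : Set G) : Subgroup G) *
          Nat.card (A ⊓ B : Subgroup G)) := by ring
    _ = (Nat.card X * Nat.card Y) *
        (Nat.card (A ⊓ centralizer (X : Set G) : Subgroup G) *
          Nat.card (B ⊓ centralizer (Y : Set G) : Subgroup G)) := by rw [c1, c2]
    _ = Nat.card X * Nat.card (A ⊓ centralizer (X : Set G) : Subgroup G) *
        (Nat.card Y * Nat.card (B ⊓ centralizer (Y : Set G) : Subgroup G)) := by ring

end Central2

section Master

variable {G : Type*} [Group G] [Finite G] {A B : Subgroup G}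

/-- the master inequality : `m_G(U)² |Z|⁴ ≤ m_A(X) m_B(Y) m_A(U⊓A) m_B(U⊓B)`. -/
lemma cd_master (hG : ∀ g : G, ∃ a ∈ A, ∃ b ∈ B, g = a * b)
    (hcomm : ∀ a ∈ A, ∀ b ∈ B, a * b = b * a) (U : Subgroup G) :
    (m ⊤ U * m ⊤ U) * Nat.card (A ⊓ B : Subgroup G) ^ 4 ≤
      (m A (A ⊓ (U ⊔ B)) * m B (B ⊓ (U ⊔ A))) * (m A (U ⊓ A) * m B (U ⊓ B)) := by
  have hG' := cd_swap_hG hG hcomm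
  have hcomm' := cd_swap_comm hcomm
  set C : Subgroup G := centralizer (U : Set G) with hCdef
  have e1 := cd_count hG hcomm U
  have e2 := cd_count hG' hcomm' U
  rw [inf_comm B A] at e2
  have e3 := cd_count hG hcomm C
  have e4 := cd_count hG' hcomm' C
  rw [inf_comm B A] at e4
  have r1 : C ⊓ B = B ⊓ centralizer ((B ⊓ (U ⊔ A) : Subgroup G) : Set G) := by
    rw [inf_comm]; exact cd_cent_proj hG' hcomm' U
  have r2 : C ⊓ A = A ⊓ centralizer ((A ⊓ (U ⊔ B) : Subgroup G) : Set G) := by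
    rw [inf_comm]; exact cd_cent_proj hG hcomm U
  rw [r1] at e3
  rw [r2] at e4
  have b1 : Nat.card (A ⊓ (C ⊔ B) : Subgroup G) ≤
      Nat.card (A ⊓ centralizer ((U ⊓ A : Subgroup G) : Set G) : Subgroup G) :=
    Subgroup.card_le_of_le (le_inf inf_le_left
      ((le_refl (A ⊓ (C ⊔ B))).trans (cd_proj_cent_le hG hcomm U)))
  have b2 : Nat.card (B ⊓ (C ⊔ A) : Subgroup G) ≤
      Nat.card (B ⊓ centralizer ((U ⊓ B : Subgroup G) : Set G) : Subgroup G) := by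
    have h := cd_proj_cent_le hG' hcomm' U
    rw [inf_comm U B] at h ⊢
    exact Subgroup.card_le_of_le (le_inf inf_le_left h)
  unfold m
  rw [top_inf_eq, ← hCdef]
  set u := Nat.card U
  set z := Nat.card (A ⊓ B : Subgroup G)
  set c := Nat.card C
  set x := Nat.card (A ⊓ (U ⊔ B) : Subgroup G)
  set y := Nat.card (B ⊓ (U ⊔ A) : Subgroup G)
  set ua := Nat.card (U ⊓ A : Subgroup G)
  set ub := Nat.card (U ⊓ B : Subgroup G)
  set cax := Nat.card (A ⊓ centralizer ((A ⊓ (U ⊔ B) : Subgroup G) : Set G) : Subgroup G)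
  set cby := Nat.card (B ⊓ centralizer ((B ⊓ (U ⊔ A) : Subgroup G) : Set G) : Subgroup G)
  set pa := Nat.card (A ⊓ (C ⊔ B) : Subgroup G)
  set pb := Nat.card (B ⊓ (C ⊔ A) : Subgroup G)
  set qa := Nat.card (A ⊓ centralizer ((U ⊓ A : Subgroup G) : Set G) : Subgroup G)
  set qb := Nat.card (B ⊓ centralizer ((U ⊓ B : Subgroup G) : Set G) : Subgroup G)
  calc (u * c * (u * c)) * z ^ 4
      = (u * z) * (u * z) * ((c * z) * (c * z)) := by ring
    _ = (x * ub) * (y * ua) * ((pa * cby) * (pb * cax)) := by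
        nth_rewrite 1 [e1]
        nth_rewrite 1 [e2]
        nth_rewrite 1 [e3]
        rw [e4]
    _ = (pa * pb) * (x * ub * (y * ua) * (cby * cax)) := by ring
    _ ≤ (qa * qb) * (x * ub * (y * ua) * (cby * cax)) :=
        Nat.mul_le_mul (Nat.mul_le_mul b1 b2) le_rfl
    _ = (x * cax * (y * cby)) * (ua * qa * (ub * qb)) := by ring

end Master

theorem stmt13 {G : Type*} [Group G] [Finite G] (A B : Subgroup G)
    (hG : ∀ g : G, ∃ a ∈ A, ∃ b ∈ B, g = a * b)
    (hcomm : ∀ a ∈ A, ∀ b ∈ B, a * b = b * a) :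
    (∀ X ∈ CD A, ∀ Y ∈ CD B, X ⊔ Y ∈ CD (⊤ : Subgroup G)) ∧
      (∀ TA TB TG : Subgroup G, IsGreatest (CD A) TA → IsGreatest (CD B) TB →
        IsGreatest (CD (⊤ : Subgroup G)) TG → TG = TA ⊔ TB) ∧
      (∀ BA BB BG : Subgroup G, IsLeast (CD A) BA → IsLeast (CD B) BB →
        IsLeast (CD (⊤ : Subgroup G)) BG → BG = BA ⊔ BB) := by
  have hG' := cd_swap_hG hG hcomm
  have hcomm' := cd_swap_comm hcomm
  have hZpos : 0 < Nat.card (A ⊓ B : Subgroup G) := Nat.card_pos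
  have hbound : ∀ L : Subgroup G,
      (m ⊤ L * m ⊤ L) * Nat.card (A ⊓ B : Subgroup G) ^ 4 ≤
        (mstar A * mstar B) * (mstar A * mstar B) := by
    intro L
    refine (cd_master hG hcomm L).trans ?_
    exact Nat.mul_le_mul
      (Nat.mul_le_mul (le_mstar inf_le_left) (le_mstar inf_le_left))
      (Nat.mul_le_mul (le_mstar inf_le_right) (le_mstar inf_le_right))
  have part1 : ∀ X ∈ CD A, ∀ Y ∈ CD B, X ⊔ Y ∈ CD (⊤ : Subgroup G) := by
    intro X hX Y hY
    have hZX : A ⊓ B ≤ X := cd_inf_le_CD hG hcomm hX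
    have hZY : A ⊓ B ≤ Y := by rw [inf_comm]; exact cd_inf_le_CD hG' hcomm' hY
    have hsup := cd_m_sup hG hcomm hX.1 hY.1 hZX hZY
    rw [mstar_eq hX, mstar_eq hY] at hsup
    refine ⟨le_top, fun L _ => ?_⟩
    have h1 := hbound L
    have h2 : (mstar A * mstar B) * (mstar A * mstar B)
        = (m ⊤ (X ⊔ Y) * m ⊤ (X ⊔ Y)) * Nat.card (A ⊓ B : Subgroup G) ^ 4 := by
      rw [← hsup]; ring
    rw [h2] at h1
    have h3 : m ⊤ L * m ⊤ L ≤ m ⊤ (X ⊔ Y) * m ⊤ (X ⊔ Y) :=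
      Nat.le_of_mul_le_mul_right h1 (pow_pos hZpos 4)
    exact Nat.mul_self_le_mul_self_iff.mp h3
  have hex : ∀ W : Subgroup G, ∃ K, K ∈ CD W := by
    intro W
    have : Finite (Subgroup G) := Finite.of_injective _ (SetLike.coe_injective (A := Subgroup G))
    have hne : Nonempty {K : Subgroup G // K ≤ W} := ⟨⟨⊥, bot_le⟩⟩
    obtain ⟨K, hK⟩ := Finite.exists_max (fun K : {K : Subgroup G // K ≤ W} => m W K)
    exact ⟨K.1, K.2, fun L hL => hK ⟨L, hL⟩⟩
  have hmtop : ∀ U ∈ CD (⊤ : Subgroup G),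
      (m ⊤ U * m ⊤ U) * Nat.card (A ⊓ B : Subgroup G) ^ 4
        = (mstar A * mstar B) * (mstar A * mstar B) := by
    intro U hU
    obtain ⟨X0, hX0⟩ := hex A
    obtain ⟨Y0, hY0⟩ := hex B
    have hle : m ⊤ (X0 ⊔ Y0) ≤ m ⊤ U := hU.2 _ le_top
    have hsup := cd_m_sup hG hcomm hX0.1 hY0.1 (cd_inf_le_CD hG hcomm hX0)
      (by rw [inf_comm]; exact cd_inf_le_CD hG' hcomm' hY0)
    rw [mstar_eq hX0, mstar_eq hY0] at hsup
    refine le_antisymm (hbound U) ?_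
    calc (mstar A * mstar B) * (mstar A * mstar B)
        = (m ⊤ (X0 ⊔ Y0) * m ⊤ (X0 ⊔ Y0)) * Nat.card (A ⊓ B : Subgroup G) ^ 4 := by
          rw [← hsup]; ring
      _ ≤ (m ⊤ U * m ⊤ U) * Nat.card (A ⊓ B : Subgroup G) ^ 4 :=
          Nat.mul_le_mul (Nat.mul_le_mul hle hle) le_rfl
  have extract : ∀ U ∈ CD (⊤ : Subgroup G),
      (A ⊓ (U ⊔ B)) ∈ CD A ∧ (B ⊓ (U ⊔ A)) ∈ CD B ∧ (U ⊓ A) ∈ CD A ∧ (U ⊓ B) ∈ CD B := by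
    intro U hU
    have hmaster := cd_master hG hcomm U
    rw [hmtop U hU] at hmaster
    have p1 : m A (A ⊓ (U ⊔ B)) * m B (B ⊓ (U ⊔ A)) ≤ mstar A * mstar B :=
      Nat.mul_le_mul (le_mstar inf_le_left) (le_mstar inf_le_left)
    have p2 : m A (U ⊓ A) * m B (U ⊓ B) ≤ mstar A * mstar B :=
      Nat.mul_le_mul (le_mstar inf_le_right) (le_mstar inf_le_right)
    obtain ⟨q1, q2⟩ := cd_eq_of_prod p1 p2 hmaster
      (Nat.mul_pos (m_pos _ _) (m_pos _ _)) (Nat.mul_pos (mstar_pos A) (mstar_pos B))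
    obtain ⟨q3, q4⟩ := cd_eq_of_prod (le_mstar inf_le_left) (le_mstar inf_le_left) q1.ge
      (m_pos _ _) (mstar_pos B)
    obtain ⟨q5, q6⟩ := cd_eq_of_prod (le_mstar inf_le_right) (le_mstar inf_le_right) q2.ge
      (m_pos _ _) (mstar_pos B)
    exact ⟨mem_CD_of_max inf_le_left q3, mem_CD_of_max inf_le_left q4,
      mem_CD_of_max inf_le_right q5, mem_CD_of_max inf_le_right q6⟩
  refine ⟨part1, ?_, ?_⟩
  · intro TA TB TG hTA hTB hTG
    have h1 : TA ⊔ TB ≤ TG := hTG.2 (part1 TA hTA.1 TB hTB.1)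
    obtain ⟨hXCD, hYCD, -, -⟩ := extract TG hTG.1
    have h2 : TG ≤ TA ⊔ TB :=
      (cd_le_proj_sup hG TG).trans (sup_le_sup (hTA.2 hXCD) (hTB.2 hYCD))
    exact le_antisymm h2 h1
  · intro BA BB BG hBA hBB hBG
    have h1 : BG ≤ BA ⊔ BB := hBG.2 (part1 BA hBA.1 BB hBB.1)
    obtain ⟨-, -, hACD, hBCD⟩ := extract BG hBG.1
    exact le_antisymm h1
      (sup_le ((hBA.2 hACD).trans inf_le_left) ((hBB.2 hBCD).trans inf_le_left))
end

section
/- Suppose a finite group G = AB with B ≤ Z(G). Then CD(G) = {XB : X ∈ CD(A)}. -/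
open scoped Pointwise

/-!
Adjoining a central subgroup `S` to `K` keeps `C(K)` and can only enlarge `K`, so it never lowers
`m_W`. Hence every member of `CD(W)` contains each central `S ≤ W`, and `m_W` may be maximised
over the subgroups containing `S` only. For `CD(G)` these are the `U ≥ B`, for `CD(A)` the `X` with
`A ∩ B ≤ X ≤ A`; since `G = AB`, Dedekind's law makes `X ↦ XB`, `U ↦ A ∩ U` mutually inverse
bijections between the two intervals. As `C_G(XB) = C_G(X) = C_A(X) B` and `|HB| |H ∩ B| = |H| |B|`,
`m_G(XB) |A ∩ B|² = m_A(X) |B|²`, so the bijection matches the maximisers.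
-/

namespace Subgroup

variable {G : Type*} [Group G]

theorem normal_of_le_center {B : Subgroup G} (hB : B ≤ center G) : B.Normal :=
  ⟨fun n hn g => by rwa [mem_center_iff.mp (hB hn) g, mul_inv_cancel_right]⟩

theorem centralizer_sup_of_le_center (K : Subgroup G) {S : Subgroup G} (hS : S ≤ center G) :
    centralizer ((K ⊔ S : Subgroup G) : Set G) = centralizer K := by
  refine le_antisymm (centralizer_le (SetLike.coe_subset_coe.mpr le_sup_left)) ?_
  rw [le_centralizer_iff]
  exact sup_le (le_centralizer_iff.mp le_rfl) (hS.trans (center_le_centralizer _))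

theorem card_sup_mul_card_inf (H K : Subgroup G) [K.Normal] :
    Nat.card (H ⊔ K : Subgroup G) * Nat.card (H ⊓ K : Subgroup G) = Nat.card H * Nat.card K := by
  have hK := relIndex_mul_relIndex ⊥ K (H ⊔ K) bot_le le_sup_right
  have hH := relIndex_mul_relIndex ⊥ (H ⊓ K) H bot_le inf_le_left
  rw [relIndex_sup_right] at hK
  rw [inf_relIndex_left] at hH
  simp only [relIndex_bot_left] at hK hH
  rw [← hK, ← hH]
  ring

theorem inf_sup_eq_of_mul_eq_univ {A B U : Subgroup G} [B.Normal]
    (hAB : (A : Set G) * (B : Set G) = Set.univ) (hBU : B ≤ U) : (A ⊓ U) ⊔ B = U := by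
  rw [← SetLike.coe_set_eq, mul_normal, inf_comm, inf_mul_assoc U A B hBU, hAB, Set.inter_univ]

theorem card_mul_card_inf_eq_of_mul_eq_univ {A B U : Subgroup G} [B.Normal]
    (hAB : (A : Set G) * (B : Set G) = Set.univ) (hBU : B ≤ U) :
    Nat.card U * Nat.card (A ⊓ B : Subgroup G) = Nat.card (A ⊓ U : Subgroup G) * Nat.card B := by
  have h := card_sup_mul_card_inf (A ⊓ U) B
  rwa [inf_sup_eq_of_mul_eq_univ hAB hBU, inf_assoc, inf_eq_right.mpr hBU] at h

end Subgroup

open Subgroup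

section ChermakDelgado

variable {G : Type*} [Group G]

theorem m_top_sup_mul_card_inf_sq {A B X : Subgroup G}
    (hAB : (A : Set G) * (B : Set G) = Set.univ) (hBZ : B ≤ center G) (hXA : X ≤ A)
    (hBX : A ⊓ B ≤ X) :
    m ⊤ (X ⊔ B) * Nat.card (A ⊓ B : Subgroup G) ^ 2 = m A X * Nat.card B ^ 2 := by
  have := normal_of_le_center hBZ
  have hsup : Nat.card (X ⊔ B : Subgroup G) * Nat.card (A ⊓ B : Subgroup G)
      = Nat.card X * Nat.card B := by
    rw [← le_antisymm (inf_le_inf_right B hXA) (le_inf hBX inf_le_right)]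
    exact card_sup_mul_card_inf X B
  have hcent : Nat.card (centralizer (X : Set G)) * Nat.card (A ⊓ B : Subgroup G)
      = Nat.card (A ⊓ centralizer (X : Set G) : Subgroup G) * Nat.card B :=
    card_mul_card_inf_eq_of_mul_eq_univ hAB (hBZ.trans (center_le_centralizer _))
  rw [m, m, centralizer_sup_of_le_center X hBZ, top_inf_eq]
  calc Nat.card (X ⊔ B : Subgroup G) * Nat.card (centralizer (X : Set G))
        * Nat.card (A ⊓ B : Subgroup G) ^ 2
      = (Nat.card (X ⊔ B : Subgroup G) * Nat.card (A ⊓ B : Subgroup G))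
          * (Nat.card (centralizer (X : Set G)) * Nat.card (A ⊓ B : Subgroup G)) := by ring
    _ = Nat.card X * Nat.card (A ⊓ centralizer (X : Set G) : Subgroup G) * Nat.card B ^ 2 := by
      rw [hsup, hcent]; ring

variable [Finite G]

theorem m_le_m_sup_of_le_center (W K : Subgroup G) {S : Subgroup G} (hS : S ≤ center G) :
    m W K ≤ m W (K ⊔ S) := by
  rw [m, m, centralizer_sup_of_le_center K hS]
  exact Nat.mul_le_mul_right _ (card_le_of_le le_sup_left)

theorem le_of_mem_CD_of_le_center {W K S : Subgroup G} (hK : K ∈ CD W) (hSW : S ≤ W)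
    (hS : S ≤ center G) : S ≤ K := by
  have h := hK.2 (K ⊔ S) (sup_le hK.1 hSW)
  rw [m, m, centralizer_sup_of_le_center K hS] at h
  have hcard := Nat.le_of_mul_le_mul_right h Nat.card_pos
  exact sup_eq_left.mp (eq_of_le_of_card_ge le_sup_left hcard).symm

theorem mem_CD_of_forall_le {W K S : Subgroup G} (hSW : S ≤ W) (hS : S ≤ center G)
    (hKW : K ≤ W) (h : ∀ L ≤ W, S ≤ L → m W L ≤ m W K) : K ∈ CD W :=
  ⟨hKW, fun L hLW =>
    (m_le_m_sup_of_le_center W L hS).trans (h _ (sup_le hLW hSW) le_sup_right)⟩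

theorem m_top_sup_le_m_top_sup_iff {A B X Y : Subgroup G}
    (hAB : (A : Set G) * (B : Set G) = Set.univ) (hBZ : B ≤ center G) (hXA : X ≤ A)
    (hBX : A ⊓ B ≤ X) (hYA : Y ≤ A) (hBY : A ⊓ B ≤ Y) : m ⊤ (X ⊔ B) ≤ m ⊤ (Y ⊔ B) ↔ m A X ≤ m A Y := by
  rw [← Nat.mul_le_mul_right_iff (pow_pos (Nat.card_pos (α := ↥(A ⊓ B))) 2),
    m_top_sup_mul_card_inf_sq hAB hBZ hXA hBX, m_top_sup_mul_card_inf_sq hAB hBZ hYA hBY]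
  exact Nat.mul_le_mul_right_iff (pow_pos Nat.card_pos 2)

end ChermakDelgado

theorem stmt15 {G : Type*} [Group G] [Finite G] (A B : Subgroup G)
    (hG : ∀ g : G, ∃ a ∈ A, ∃ b ∈ B, g = a * b)
    (hBZ : B ≤ Subgroup.center G) :
    CD (⊤ : Subgroup G) = {U : Subgroup G | ∃ X ∈ CD A, U = X ⊔ B} := by
  have hAB : (A : Set G) * (B : Set G) = Set.univ := Set.eq_univ_of_forall fun g => by
    obtain ⟨a, ha, b, hb, rfl⟩ := hG g
    exact Set.mul_mem_mul ha hb
  have := normal_of_le_center hBZ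
  have hABZ : A ⊓ B ≤ center G := inf_le_right.trans hBZ
  ext U
  constructor
  · intro hU
    have hBU : B ≤ U := le_of_mem_CD_of_le_center hU le_top hBZ
    have hX : A ⊓ B ≤ A ⊓ U := inf_le_inf_left A hBU
    refine ⟨A ⊓ U, mem_CD_of_forall_le inf_le_left hABZ inf_le_left fun Y hYA hY => ?_,
      (inf_sup_eq_of_mul_eq_univ hAB hBU).symm⟩
    rw [← m_top_sup_le_m_top_sup_iff hAB hBZ hYA hY inf_le_left hX,
      inf_sup_eq_of_mul_eq_univ hAB hBU]
    exact hU.2 _ le_top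
  · rintro ⟨X, hX, rfl⟩
    have hBX : A ⊓ B ≤ X := le_of_mem_CD_of_le_center hX inf_le_left hABZ
    refine mem_CD_of_forall_le le_top hBZ le_top fun V _ hBV => ?_
    rw [← inf_sup_eq_of_mul_eq_univ hAB hBV,
      m_top_sup_le_m_top_sup_iff hAB hBZ inf_le_left (inf_le_inf_left A hBV) hX.1 hBX]
    exact hX.2 _ inf_le_left
end

section
/- Let G be a finite group and H ∈ CD(G). Then CD(H) = {X ∈ CD(G) : Z(H) ≤ X ≤ H}, i.e., the Chermak–Delgado lattice of H equals the interval in CD(G) between Z(H) and H. -/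
set_option maxHeartbeats 1000000
set_option linter.unusedSectionVars false


open scoped Pointwise

namespace CDAux

open Subgroup

variable {G : Type*} [Group G] [Finite G]

lemma card_mul_card_le (A B : Subgroup G) :
    Nat.card A * Nat.card B ≤ Nat.card ↥(A ⊔ B) * Nat.card ↥(A ⊓ B) := by
  have h1 : Nat.card ↥(A ⊓ B) * (A ⊓ B).relIndex A = Nat.card A := by
    rw [← relIndex_bot_left A, ← relIndex_bot_left (A ⊓ B)]
    exact relIndex_mul_relIndex ⊥ (A ⊓ B) A bot_le inf_le_left
  have h2 : Nat.card B * B.relIndex (A ⊔ B) = Nat.card ↥(A ⊔ B) := by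
    rw [← relIndex_bot_left (A ⊔ B), ← relIndex_bot_left B]
    exact relIndex_mul_relIndex ⊥ B (A ⊔ B) bot_le le_sup_right
  have h3 : (A ⊓ B).relIndex A = B.relIndex A := inf_relIndex_left A B
  have h4 : B.relIndex A ≤ B.relIndex (A ⊔ B) :=
    relIndex_le_of_le_right le_sup_left Subgroup.index_ne_zero_of_finite
  calc Nat.card A * Nat.card B = Nat.card ↥(A ⊓ B) * B.relIndex A * Nat.card B := by
        rw [← h3, h1]
    _ ≤ Nat.card ↥(A ⊓ B) * B.relIndex (A ⊔ B) * Nat.card B :=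
        Nat.mul_le_mul_right _ (Nat.mul_le_mul_left _ h4)
    _ = Nat.card ↥(A ⊔ B) * Nat.card ↥(A ⊓ B) := by rw [← h2]; ring

lemma centralizer_sup (A B : Subgroup G) :
    centralizer ((A ⊔ B : Subgroup G) : Set G)
      = centralizer (A : Set G) ⊓ centralizer (B : Set G) := by
  apply le_antisymm
  · exact le_inf (centralizer_le (SetLike.coe_subset_coe.mpr le_sup_left))
      (centralizer_le (SetLike.coe_subset_coe.mpr le_sup_right))
  · rw [le_centralizer_iff]
    exact sup_le (le_centralizer_iff.mpr inf_le_left) (le_centralizer_iff.mpr inf_le_right)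

lemma center_map (H : Subgroup G) :
    (Subgroup.center ↥H).map H.subtype = H ⊓ centralizer (H : Set G) := by
  ext x
  simp only [mem_map, Subgroup.mem_center_iff, mem_inf, mem_centralizer_iff, coe_subtype]
  constructor
  · rintro ⟨⟨y, hy⟩, hc, rfl⟩
    exact ⟨hy, fun h hh => congrArg Subtype.val (hc ⟨h, hh⟩)⟩
  · rintro ⟨hx, hc⟩
    exact ⟨⟨x, hx⟩, fun ⟨h, hh⟩ => Subtype.ext (hc h hh), rfl⟩

lemma m_top (K : Subgroup G) :
    m ⊤ K = Nat.card K * Nat.card (centralizer (K : Set G)) := by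
  unfold m; rw [top_inf_eq]

lemma cpos (A : Subgroup G) : 0 < Nat.card A := Nat.card_pos

lemma mpos (W K : Subgroup G) : 0 < m W K := Nat.mul_pos (cpos K) (cpos _)

/-- If `A ∈ CD(G)` then `C_G(A) ∈ CD(G)` and `C_G(C_G(A)) = A`. -/
lemma cd_centralizer {A : Subgroup G} (hA : A ∈ CD (⊤ : Subgroup G)) :
    centralizer (A : Set G) ∈ CD (⊤ : Subgroup G) ∧
      centralizer ((centralizer (A : Set G) : Subgroup G) : Set G) = A := by
  set cA := centralizer (A : Set G) with hcA
  have hle : A ≤ centralizer (cA : Set G) := le_centralizer_iff.mpr le_rfl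
  have h1 : m ⊤ A ≤ m ⊤ cA := by
    rw [m_top, m_top]
    calc Nat.card A * Nat.card cA
        ≤ Nat.card (centralizer (cA : Set G)) * Nat.card cA :=
          Nat.mul_le_mul_right _ (card_le_of_le hle)
      _ = Nat.card cA * Nat.card (centralizer (cA : Set G)) := mul_comm _ _
  have h2 : m ⊤ cA ≤ m ⊤ A := hA.2 cA le_top
  have heq : m ⊤ cA = m ⊤ A := le_antisymm h2 h1
  have hcard : Nat.card (centralizer (cA : Set G)) ≤ Nat.card A := by
    rw [m_top, m_top] at h2
    rw [show Nat.card A * Nat.card cA = Nat.card cA * Nat.card A from mul_comm _ _] at h2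
    exact Nat.le_of_mul_le_mul_left h2 (cpos cA)
  have hccA : centralizer (cA : Set G) = A := (eq_of_le_of_card_ge hle hcard).symm
  exact ⟨⟨le_top, fun L hL => (hA.2 L hL).trans heq.symm.le⟩, hccA⟩

/-- CD(G) is closed under join and meet, with the product formula for cardinalities. -/
lemma cd_sup_inf {A B : Subgroup G} (hA : A ∈ CD (⊤ : Subgroup G))
    (hB : B ∈ CD (⊤ : Subgroup G)) :
    (A ⊔ B) ∈ CD (⊤ : Subgroup G) ∧ (A ⊓ B) ∈ CD (⊤ : Subgroup G) ∧
      Nat.card ↥(A ⊔ B) * Nat.card ↥(A ⊓ B) = Nat.card A * Nat.card B := by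
  have hmAB : m ⊤ B = m ⊤ A := le_antisymm (hA.2 B le_top) (hB.2 A le_top)
  have hP : Nat.card A * Nat.card B ≤ Nat.card ↥(A ⊔ B) * Nat.card ↥(A ⊓ B) :=
    card_mul_card_le A B
  set cA := centralizer (A : Set G)
  set cB := centralizer (B : Set G)
  have hQ : Nat.card cA * Nat.card cB ≤
      Nat.card (centralizer ((A ⊔ B : Subgroup G) : Set G)) *
        Nat.card (centralizer ((A ⊓ B : Subgroup G) : Set G)) := by
    have h5 : cA ⊔ cB ≤ centralizer ((A ⊓ B : Subgroup G) : Set G) :=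
      sup_le (centralizer_le (SetLike.coe_subset_coe.mpr inf_le_left))
        (centralizer_le (SetLike.coe_subset_coe.mpr inf_le_right))
    calc Nat.card cA * Nat.card cB
        ≤ Nat.card ↥(cA ⊔ cB) * Nat.card ↥(cA ⊓ cB) := card_mul_card_le cA cB
      _ = Nat.card ↥(cA ⊓ cB) * Nat.card ↥(cA ⊔ cB) := mul_comm _ _
      _ ≤ Nat.card (centralizer ((A ⊔ B : Subgroup G) : Set G)) *
            Nat.card (centralizer ((A ⊓ B : Subgroup G) : Set G)) :=
          Nat.mul_le_mul (le_of_eq (by rw [centralizer_sup])) (card_le_of_le h5)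
  have key : m ⊤ A * m ⊤ B ≤ m ⊤ (A ⊔ B) * m ⊤ (A ⊓ B) := by
    rw [m_top, m_top, m_top, m_top]
    calc Nat.card A * Nat.card cA * (Nat.card B * Nat.card cB)
        = (Nat.card A * Nat.card B) * (Nat.card cA * Nat.card cB) := by ring
      _ ≤ (Nat.card ↥(A ⊔ B) * Nat.card ↥(A ⊓ B)) *
            (Nat.card (centralizer ((A ⊔ B : Subgroup G) : Set G)) *
              Nat.card (centralizer ((A ⊓ B : Subgroup G) : Set G))) :=
          Nat.mul_le_mul hP hQ
      _ = Nat.card ↥(A ⊔ B) * Nat.card (centralizer ((A ⊔ B : Subgroup G) : Set G)) *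
            (Nat.card ↥(A ⊓ B) * Nat.card (centralizer ((A ⊓ B : Subgroup G) : Set G))) := by
          ring
  have h6 : m ⊤ (A ⊔ B) ≤ m ⊤ A := hA.2 _ le_top
  have h7 : m ⊤ (A ⊓ B) ≤ m ⊤ A := hA.2 _ le_top
  have hpos : 0 < m ⊤ A := mpos ⊤ A
  rw [hmAB] at key
  have e1 : m ⊤ (A ⊔ B) = m ⊤ A := by nlinarith [mpos ⊤ (A ⊔ B), mpos ⊤ (A ⊓ B)]
  have e2 : m ⊤ (A ⊓ B) = m ⊤ A := by nlinarith [mpos ⊤ (A ⊔ B), mpos ⊤ (A ⊓ B)]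
  refine ⟨⟨le_top, fun L hL => (hA.2 L hL).trans e1.symm.le⟩,
    ⟨le_top, fun L hL => (hA.2 L hL).trans e2.symm.le⟩, ?_⟩
  -- product formula
  have hPQ : (Nat.card ↥(A ⊔ B) * Nat.card ↥(A ⊓ B)) *
      (Nat.card (centralizer ((A ⊔ B : Subgroup G) : Set G)) *
        Nat.card (centralizer ((A ⊓ B : Subgroup G) : Set G))) =
      (Nat.card A * Nat.card B) * (Nat.card cA * Nat.card cB) := by
    have : m ⊤ (A ⊔ B) * m ⊤ (A ⊓ B) = m ⊤ A * m ⊤ B := by rw [e1, e2, hmAB]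
    rw [m_top, m_top, m_top, m_top] at this
    calc (Nat.card ↥(A ⊔ B) * Nat.card ↥(A ⊓ B)) *
        (Nat.card (centralizer ((A ⊔ B : Subgroup G) : Set G)) *
          Nat.card (centralizer ((A ⊓ B : Subgroup G) : Set G)))
        = Nat.card ↥(A ⊔ B) * Nat.card (centralizer ((A ⊔ B : Subgroup G) : Set G)) *
            (Nat.card ↥(A ⊓ B) * Nat.card (centralizer ((A ⊓ B : Subgroup G) : Set G))) := by
          ring
      _ = Nat.card A * Nat.card cA * (Nat.card B * Nat.card cB) := this
      _ = (Nat.card A * Nat.card B) * (Nat.card cA * Nat.card cB) := by ring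
  nlinarith [hP, hQ, Nat.mul_pos (cpos A) (cpos B), Nat.mul_pos (cpos cA) (cpos cB)]

end CDAux

theorem stmt19 {G : Type*} [Group G] [Finite G] (H : Subgroup G)
    (hH : H ∈ CD (⊤ : Subgroup G)) :
    CD H = {X : Subgroup G | X ∈ CD (⊤ : Subgroup G) ∧
      (Subgroup.center ↥H).map H.subtype ≤ X ∧ X ≤ H} := by
  open Subgroup CDAux in
  have hZmap : (Subgroup.center ↥H).map H.subtype = H ⊓ Subgroup.centralizer (H : Set G) :=
    CDAux.center_map H
  set cH := Subgroup.centralizer (H : Set G) with hcH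
  set Z : Subgroup G := H ⊓ cH with hZ
  have hZH : Z ≤ H := inf_le_left
  have hZcH : Z ≤ cH := inf_le_right
  have cardposZ : 0 < Nat.card Z := CDAux.cpos Z
  have cardposcH : 0 < Nat.card cH := CDAux.cpos cH
  -- the key bound, for all K ≤ H
  have hbound : ∀ K ≤ H, m H K ≤ Nat.card H * Nat.card Z ∧
      m H K * Nat.card cH ≤ m ⊤ K * Nat.card Z := by
    intro K hK
    set cK := Subgroup.centralizer (K : Set G) with hcK
    set C : Subgroup G := H ⊓ cK with hC
    have hcHK : cH ≤ cK := Subgroup.centralizer_le (SetLike.coe_subset_coe.mpr hK)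
    have hsup : C ⊔ cH ≤ cK := sup_le inf_le_right hcHK
    have hCZ : C ⊓ cH = Z := by
      apply le_antisymm
      · exact le_inf (inf_le_left.trans inf_le_left) inf_le_right
      · exact le_inf (le_inf hZH (hZcH.trans hcHK)) hZcH
    have step1 : Nat.card C * Nat.card cH ≤ Nat.card cK * Nat.card Z := by
      calc Nat.card C * Nat.card cH ≤ Nat.card ↥(C ⊔ cH) * Nat.card ↥(C ⊓ cH) :=
            CDAux.card_mul_card_le C cH
        _ = Nat.card ↥(C ⊔ cH) * Nat.card Z := by rw [hCZ]
        _ ≤ Nat.card cK * Nat.card Z :=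
            Nat.mul_le_mul_right _ (Subgroup.card_le_of_le hsup)
    have step2 : m H K * Nat.card cH ≤ m ⊤ K * Nat.card Z := by
      have h := Nat.mul_le_mul_left (Nat.card K) step1
      calc m H K * Nat.card cH = Nat.card K * (Nat.card C * Nat.card cH) := by
            unfold m; ring
        _ ≤ Nat.card K * (Nat.card cK * Nat.card Z) := h
        _ = m ⊤ K * Nat.card Z := by rw [CDAux.m_top]; ring
    refine ⟨?_, step2⟩
    have step3 : m H K * Nat.card cH ≤ (Nat.card H * Nat.card Z) * Nat.card cH := by
      calc m H K * Nat.card cH ≤ m ⊤ K * Nat.card Z := step2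
        _ ≤ m ⊤ H * Nat.card Z := Nat.mul_le_mul_right _ (hH.2 K le_top)
        _ = (Nat.card H * Nat.card Z) * Nat.card cH := by rw [CDAux.m_top]; ring
    exact Nat.le_of_mul_le_mul_right step3 cardposcH
  have hmHH : m H H = Nat.card H * Nat.card Z := by unfold m; rw [← hcH, ← hZ]
  ext K
  simp only [Set.mem_setOf_eq, hZmap, ← hcH, ← hZ]
  constructor
  · rintro ⟨hKH, hKmax⟩
    have hval : m H K = Nat.card H * Nat.card Z :=
      le_antisymm (hbound K hKH).1 (hmHH ▸ hKmax H le_rfl)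
    -- K ∈ CD ⊤
    have hmK : m ⊤ H ≤ m ⊤ K := by
      have h2 := (hbound K hKH).2
      rw [hval] at h2
      have h3 : m ⊤ H * Nat.card Z ≤ m ⊤ K * Nat.card Z := by
        calc m ⊤ H * Nat.card Z = Nat.card H * Nat.card Z * Nat.card cH := by
              rw [CDAux.m_top]; ring
          _ ≤ m ⊤ K * Nat.card Z := h2
      exact Nat.le_of_mul_le_mul_right h3 cardposZ
    have hKcd : K ∈ CD (⊤ : Subgroup G) :=
      ⟨le_top, fun L hL => (hH.2 L hL).trans hmK⟩
    -- Z ≤ K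
    have hZK : Z ≤ K := by
      have hKZH : K ⊔ Z ≤ H := sup_le hKH hZH
      have hHcZ : H ≤ Subgroup.centralizer (Z : Set G) :=
        Subgroup.le_centralizer_iff.mpr hZcH
      have hinf : H ⊓ Subgroup.centralizer ((K ⊔ Z : Subgroup G) : Set G)
          = H ⊓ Subgroup.centralizer (K : Set G) := by
        rw [CDAux.centralizer_sup]
        apply le_antisymm
        · exact le_inf inf_le_left (inf_le_right.trans inf_le_left)
        · exact le_inf inf_le_left (le_inf inf_le_right (inf_le_left.trans hHcZ))
      have hmle : m H (K ⊔ Z) ≤ m H K := hKmax _ hKZH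
      have hexp : m H (K ⊔ Z) = Nat.card ↥(K ⊔ Z) *
          Nat.card ↥(H ⊓ Subgroup.centralizer (K : Set G)) := by
        unfold m; rw [hinf]
      have hle : Nat.card ↥(K ⊔ Z) ≤ Nat.card K := by
        rw [hexp] at hmle
        exact Nat.le_of_mul_le_mul_right hmle (CDAux.cpos _)
      have : K = K ⊔ Z := Subgroup.eq_of_le_of_card_ge le_sup_left hle
      exact this ▸ le_sup_right
    exact ⟨hKcd, hZK, hKH⟩
  · rintro ⟨hX, hZX, hXH⟩
    refine ⟨hXH, fun L hL => (hbound L hL).1.trans_eq ?_⟩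
    -- compute m H K = |H| |Z|
    obtain ⟨hcX_cd, hccX⟩ := CDAux.cd_centralizer hX
    set cX := Subgroup.centralizer (K : Set G) with hcX
    obtain ⟨hsup_cd, -, hprod⟩ := CDAux.cd_sup_inf hH hcX_cd
    have hcsup : Subgroup.centralizer ((H ⊔ cX : Subgroup G) : Set G) = Z := by
      rw [CDAux.centralizer_sup, ← hcH, hccX]
      apply le_antisymm
      · exact le_inf (inf_le_right.trans hXH) inf_le_left
      · exact le_inf hZcH hZX
    have hmsup : m ⊤ (H ⊔ cX) = m ⊤ H :=
      le_antisymm (hH.2 _ le_top) (hsup_cd.2 H le_top)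
    have e1 : Nat.card ↥(H ⊔ cX) * Nat.card Z = m ⊤ H := by
      rw [← hmsup, CDAux.m_top, hcsup]
    have e2 : Nat.card K * Nat.card cX = m ⊤ H := by
      rw [← CDAux.m_top]
      exact le_antisymm (hH.2 K le_top) (hX.2 H le_top)
    have keyeq : m H K * (Nat.card ↥(H ⊔ cX) * Nat.card Z)
        = (Nat.card H * Nat.card Z) * (Nat.card ↥(H ⊔ cX) * Nat.card Z) := by
      calc m H K * (Nat.card ↥(H ⊔ cX) * Nat.card Z)
          = Nat.card K * (Nat.card ↥(H ⊔ cX) * Nat.card ↥(H ⊓ cX)) * Nat.card Z := by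
            unfold m; ring
        _ = Nat.card K * (Nat.card H * Nat.card cX) * Nat.card Z := by rw [hprod]
        _ = Nat.card H * (Nat.card K * Nat.card cX) * Nat.card Z := by ring
        _ = Nat.card H * m ⊤ H * Nat.card Z := by rw [e2]
        _ = (Nat.card H * Nat.card Z) * (Nat.card ↥(H ⊔ cX) * Nat.card Z) := by
            rw [e1]; ring
    exact (Nat.eq_of_mul_eq_mul_right
      (Nat.mul_pos (CDAux.cpos _) cardposZ) keyeq).symm
end
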